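/- arXiv:2410.16459 — 6 statements merged into one kernel-verified Lean document; each statement's English description precedes it below -/
import Mathlib

section
/- Let $P$ be a probability mass function on a finite set $\mathcal{X}$, let $k \ge 2$ and $1 \le l \le k$ be integers, and let $p_1,\dots,p_l$ be positive integers with $p_1+\cdots+p_l = k$. Then $\prod_{j=1}^l \sum_{x\in\mathcal X} P(x)^{p_j} \le \big(\sum_{x\in\mathcal X} P(x)^{k-l+1}\big)$ when $l<k$, and the product equals $1$ when $l = k$. -/
section aux

variable {X : Type*} [Fintype X] (P : X → ℝ)

lemma pmf_key (hP0 : ∀ x, 0 ≤ P x) (hP1 : ∑ x, P x = 1)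
    (a b : ℕ) (ha : 1 ≤ a) (hb : 1 ≤ b) :
    (∑ x, P x ^ a) * (∑ x, P x ^ b) ≤ ∑ x, P x ^ (a + b - 1) := by
  obtain ⟨a', rfl⟩ : ∃ a', a = a' + 1 := ⟨a - 1, by omega⟩
  obtain ⟨b', rfl⟩ : ∃ b', b = b' + 1 := ⟨b - 1, by omega⟩
  have hab : a' + 1 + (b' + 1) - 1 = a' + b' + 1 := by omega
  rw [hab]
  have key2 : ∀ x y, P x ^ (a' + 1) * P y ^ (b' + 1) + P y ^ (a' + 1) * P x ^ (b' + 1)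
      ≤ P x ^ (a' + b' + 1) * P y + P y ^ (a' + b' + 1) * P x := by
    intro x y
    have h : 0 ≤ (P x ^ a' - P y ^ a') * (P x ^ b' - P y ^ b') * (P x * P y) := by
      rcases le_total (P x) (P y) with h | h
      · exact mul_nonneg (mul_nonneg_of_nonpos_of_nonpos
          (sub_nonpos.2 (pow_le_pow_left₀ (hP0 x) h a'))
          (sub_nonpos.2 (pow_le_pow_left₀ (hP0 x) h b')))
          (mul_nonneg (hP0 x) (hP0 y))
      · exact mul_nonneg (mul_nonneg
          (sub_nonneg.2 (pow_le_pow_left₀ (hP0 y) h a'))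
          (sub_nonneg.2 (pow_le_pow_left₀ (hP0 y) h b')))
          (mul_nonneg (hP0 x) (hP0 y))
    have e1 : P x ^ (a' + 1) = P x ^ a' * P x := by ring
    have e2 : P y ^ (b' + 1) = P y ^ b' * P y := by ring
    have e3 : P y ^ (a' + 1) = P y ^ a' * P y := by ring
    have e4 : P x ^ (b' + 1) = P x ^ b' * P x := by ring
    have e5 : P x ^ (a' + b' + 1) = P x ^ a' * P x ^ b' * P x := by ring
    have e6 : P y ^ (a' + b' + 1) = P y ^ a' * P y ^ b' * P y := by ring
    rw [e1, e2, e3, e4, e5, e6]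
    nlinarith [h]
  have hrhs : (∑ x, P x ^ (a' + b' + 1))
      = ∑ x, ∑ y, P x ^ (a' + b' + 1) * P y := by
    rw [← Finset.sum_mul_sum, hP1, mul_one]
  have hlhs : (∑ x, P x ^ (a' + 1)) * (∑ x, P x ^ (b' + 1))
      = ∑ x, ∑ y, P x ^ (a' + 1) * P y ^ (b' + 1) := by
    rw [Finset.sum_mul_sum]
  rw [hlhs, hrhs]
  have hsum : ∑ x, ∑ y,
      (P x ^ (a' + 1) * P y ^ (b' + 1) + P y ^ (a' + 1) * P x ^ (b' + 1))
      ≤ ∑ x, ∑ y, (P x ^ (a' + b' + 1) * P y + P y ^ (a' + b' + 1) * P x) :=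
    Finset.sum_le_sum fun x _ => Finset.sum_le_sum fun y _ => key2 x y
  have hfswap : (∑ x, ∑ y, P y ^ (a' + 1) * P x ^ (b' + 1))
      = ∑ x, ∑ y, P x ^ (a' + 1) * P y ^ (b' + 1) := Finset.sum_comm
  have hgswap : (∑ x, ∑ y, P y ^ (a' + b' + 1) * P x)
      = ∑ x, ∑ y, P x ^ (a' + b' + 1) * P y := Finset.sum_comm
  simp only [Finset.sum_add_distrib] at hsum
  rw [hfswap, hgswap] at hsum
  linarith

lemma pmf_prod_le (hP0 : ∀ x, 0 ≤ P x) (hP1 : ∑ x, P x = 1) :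
    ∀ (n : ℕ) (p : Fin (n + 1) → ℕ), (∀ j, 1 ≤ p j) →
      ∏ j, ∑ x, P x ^ p j ≤ ∑ x, P x ^ (∑ j, p j - (n + 1) + 1) := by
  intro n
  induction n with
  | zero =>
    intro p hp
    have h0 : ∑ j, p j = p 0 := by simp
    have h1 : p 0 - 1 + 1 = p 0 := by have := hp 0; omega
    rw [h0, h1, Fin.prod_univ_one]
  | succ n ih =>
    intro p hp
    set M := ∑ j : Fin (n + 1), p j.succ with hM
    have hMge : n + 1 ≤ M := by
      calc n + 1 = ∑ _j : Fin (n + 1), 1 := by simp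
        _ ≤ M := Finset.sum_le_sum fun j _ => hp j.succ
    have hsum : ∑ j, p j = p 0 + M := Fin.sum_univ_succ p
    have hprod : ∏ j, ∑ x, P x ^ p j
        = (∑ x, P x ^ p 0) * ∏ j : Fin (n + 1), ∑ x, P x ^ p j.succ :=
      Fin.prod_univ_succ _
    have hih := ih (fun j => p j.succ) (fun j => hp j.succ)
    have hS0 : (0:ℝ) ≤ ∑ x, P x ^ p 0 :=
      Finset.sum_nonneg fun x _ => pow_nonneg (hP0 x) _
    have hstep := pmf_key P hP0 hP1 (p 0) (M - (n + 1) + 1) (hp 0) (by omega)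
    have harith : p 0 + (M - (n + 1) + 1) - 1 = p 0 + M - (n + 1 + 1) + 1 := by
      have := hp 0; omega
    rw [harith] at hstep
    calc ∏ j, ∑ x, P x ^ p j
        = (∑ x, P x ^ p 0) * ∏ j : Fin (n + 1), ∑ x, P x ^ p j.succ := hprod
      _ ≤ (∑ x, P x ^ p 0) * ∑ x, P x ^ (M - (n + 1) + 1) :=
          mul_le_mul_of_nonneg_left hih hS0
      _ ≤ ∑ x, P x ^ (p 0 + M - (n + 1 + 1) + 1) := hstep
      _ = ∑ x, P x ^ (∑ j, p j - (n + 1 + 1) + 1) := by rw [hsum]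

end aux

/-- For a pmf `P` on a finite set and positive integers `p₁,…,p_l` summing to `k`
(`2 ≤ k`, `1 ≤ l ≤ k`): if `l < k` then `∏_j ∑_x P(x)^{p_j} ≤ ∑_x P(x)^{k-l+1}`,
and if `l = k` the product equals `1`. -/
theorem pmf_block_prod_bound {X : Type*} [Fintype X] (P : X → ℝ)
    (hP0 : ∀ x, 0 ≤ P x) (hP1 : ∑ x, P x = 1)
    (k l : ℕ) (hk : 2 ≤ k) (hl1 : 1 ≤ l) (hlk : l ≤ k)
    (p : Fin l → ℕ) (hp1 : ∀ j, 1 ≤ p j) (hpk : ∑ j, p j = k) :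
    (l < k → ∏ j, ∑ x, P x ^ p j ≤ ∑ x, P x ^ (k - l + 1)) ∧
      (l = k → ∏ j, ∑ x, P x ^ p j = 1) := by
  constructor
  · intro _
    obtain ⟨n, rfl⟩ : ∃ n, l = n + 1 := ⟨l - 1, by omega⟩
    have := pmf_prod_le P hP0 hP1 n p hp1
    rwa [hpk] at this
  · intro hlk'
    have hall : ∀ j, p j = 1 := by
      intro j
      by_contra h
      have h2 : 2 ≤ p j := by have := hp1 j; omega
      have : l + 1 ≤ ∑ j, p j := by
        calc l + 1 = (∑ _i : Fin l, 1) + 1 := by simp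
          _ ≤ ∑ i, p i := by
            have : (∑ _i : Fin l, 1) < ∑ i, p i := by
              apply Finset.sum_lt_sum (fun i _ => hp1 i) ⟨j, Finset.mem_univ j, by omega⟩
            omega
      omega
    calc ∏ j, ∑ x, P x ^ p j = ∏ _j : Fin l, (1:ℝ) := by
          apply Finset.prod_congr rfl
          intro j _
          rw [hall j]
          simpa using hP1
      _ = 1 := by simp
end

section
/- Let $X$ be a random variable on a finite set $\mathcal{X}$ with pmf $P_X$, let $k \ge 2$ and $1\le l\le k$, and let $\mathcal{P} = \{\mathcal{P}_1,\dots,\mathcal{P}_l\}$ be a partition of $\{1,\dots,k\}$ into $l$ nonempty blocks. Let $T_\mathcal{P} \subseteq \mathcal{X}^k$ be the set of tuples $x^k$ such that $x_i = x_j$ iff $i,j$ belong to the same block of $\mathcal{P}$. Then $\sum_{x^k \in T_\mathcal{P}} \prod_{i=1}^k P_X(x_i) \le \big(\sum_{x\in\mathcal X} P_X(x)^{k-l+1}\big)$ with the convention that the right-hand side equals $1$ when $l = k$. -/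
/-! Tuples with coincidence pattern `B` are in particular constant on the blocks of `B`, hence of
the form `y ∘ B`; summing over all of those factorises as `∏_b ∑_x P x ^ m_b`, with `m_b` the size
of block `b`. Chebyshev's sum inequality for the similarly ordered `P ^ a`, `P ^ b` under the
weights `P` gives `S_{a+1} S_{b+1} ≤ S_{a+b+1}` for `S_n = ∑_x P x ^ n`, and iterating it over the
blocks bounds the product by `S_{∑ (m_b - 1) + 1} = S_{k-l+1}`. -/

open Finset Function

theorem Monovary.sum_mul_sum_le_sum_weight_mul_sum {ι : Type*} {w f g : ι → ℝ}
    (s : Finset ι) (hw : ∀ i, 0 ≤ w i) (hfg : Monovary f g) :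
    (∑ i ∈ s, w i * f i) * (∑ i ∈ s, w i * g i) ≤ (∑ i ∈ s, w i) * ∑ i ∈ s, w i * (f i * g i) := by
  have h_nonneg : 0 ≤ ∑ i ∈ s, ∑ j ∈ s, w i * w j * ((f j - f i) * (g j - g i)) :=
    sum_nonneg fun i _ => sum_nonneg fun j _ =>
      mul_nonneg (mul_nonneg (hw i) (hw j)) (hfg.sub_mul_sub_nonneg i j)
  have h_expand : ∑ i ∈ s, ∑ j ∈ s, w i * w j * ((f j - f i) * (g j - g i)) =
      2 * ((∑ i ∈ s, w i) * ∑ i ∈ s, w i * (f i * g i)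
        - (∑ i ∈ s, w i * f i) * (∑ i ∈ s, w i * g i)) := by
    have h_term : ∀ i j, w i * w j * ((f j - f i) * (g j - g i)) =
        w i * (w j * (f j * g j)) + w j * (w i * (f i * g i))
          - (w i * f i * (w j * g j) + w j * f j * (w i * g i)) := fun i j => by ring
    simp only [h_term, sum_sub_distrib, sum_add_distrib, ← mul_sum, ← sum_mul]
    ring
  linarith

section

variable {X : Type*} [Fintype X] {P : X → ℝ}

theorem sum_pow_succ_mul_sum_pow_succ_le (hP0 : ∀ x, 0 ≤ P x) (hP1 : ∑ x, P x = 1) (a b : ℕ) :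
    (∑ x, P x ^ (a + 1)) * (∑ x, P x ^ (b + 1)) ≤ ∑ x, P x ^ (a + b + 1) := by
  have hmono : Monovary (fun x => P x ^ a) (fun x => P x ^ b) := fun x y hxy =>
    pow_le_pow_left₀ (hP0 x) (lt_of_pow_lt_pow_left₀ b (hP0 y) hxy).le a
  simpa [hP1, pow_succ', pow_add, mul_assoc, mul_left_comm] using
    hmono.sum_mul_sum_le_sum_weight_mul_sum univ hP0

theorem prod_sum_pow_succ_le {ι : Type*} (hP0 : ∀ x, 0 ≤ P x) (hP1 : ∑ x, P x = 1)
    (s : Finset ι) (n : ι → ℕ) :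
    ∏ b ∈ s, ∑ x, P x ^ (n b + 1) ≤ ∑ x, P x ^ (∑ b ∈ s, n b + 1) := by
  induction s using Finset.cons_induction with
  | empty => simp [hP1]
  | cons a s ha ih =>
    rw [prod_cons, sum_cons, add_assoc]
    calc (∑ x, P x ^ (n a + 1)) * ∏ b ∈ s, ∑ x, P x ^ (n b + 1)
        ≤ (∑ x, P x ^ (n a + 1)) * ∑ x, P x ^ (∑ b ∈ s, n b + 1) :=
          mul_le_mul_of_nonneg_left ih (sum_nonneg fun x _ => pow_nonneg (hP0 x) _)
      _ ≤ ∑ x, P x ^ (n a + (∑ b ∈ s, n b + 1)) := by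
          rw [← add_assoc]; exact sum_pow_succ_mul_sum_pow_succ_le hP0 hP1 _ _

theorem sum_le_sum_comp_of_forall_fiber_const {ι κ M : Type*} [Fintype κ] [DecidableEq κ]
    [AddCommMonoid M] [PartialOrder M] [IsOrderedAddMonoid M] {B : ι → κ} (hB : Surjective B)
    {s : Finset (ι → X)} (hs : ∀ x ∈ s, ∀ i j, B i = B j → x i = x j)
    (F : (ι → X) → M) (hF : ∀ x, 0 ≤ F x) :
    ∑ x ∈ s, F x ≤ ∑ y : κ → X, F (y ∘ B) := by
  classical
  have h_subset : s ⊆ univ.image (· ∘ B) := fun x hx =>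
    mem_image.2 ⟨x ∘ surjInv hB, mem_univ _,
      funext fun i => hs x hx _ _ (surjInv_eq hB (B i))⟩
  calc _ ≤ ∑ x ∈ univ.image (· ∘ B), F x :=
        sum_le_sum_of_subset_of_nonneg h_subset fun x _ _ => hF x
    _ = ∑ y : κ → X, F (y ∘ B) := sum_image fun y _ z _ h => hB.injective_comp_right h

theorem prod_comp_eq_prod_pow_card_fiber {ι κ M : Type*} [Fintype ι] [Fintype κ] [DecidableEq κ]
    [CommMonoid M] (B : ι → κ) (f : κ → M) :
    ∏ i, f (B i) = ∏ b, f b ^ #{i | B i = b} := by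
  simp_rw [← prod_fiberwise' univ B f, prod_const]

theorem card_fiber_pos {ι κ : Type*} [Fintype ι] [DecidableEq κ] {B : ι → κ}
    (hB : Surjective B) (b : κ) : 0 < #{i | B i = b} :=
  card_pos.2 ⟨(hB b).choose, by simpa using (hB b).choose_spec⟩

theorem sum_card_fiber_sub_one {ι κ : Type*} [Fintype ι] [Fintype κ] [DecidableEq κ]
    {B : ι → κ} (hB : Surjective B) :
    ∑ b, (#{i | B i = b} - 1) = Fintype.card ι - Fintype.card κ := by
  have h_sum : ∑ b, #{i | B i = b} = Fintype.card ι := by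
    rw [← card_univ, card_eq_sum_card_fiberwise fun i _ => mem_univ (B i)]
  refine h_sum ▸ Nat.eq_sub_of_add_eq ?_
  rw [Fintype.card, card_eq_sum_ones, ← sum_add_distrib]
  exact sum_congr rfl fun b _ => Nat.sub_add_cancel (card_fiber_pos hB b)

end

theorem partition_pattern_prob_bound_general {X : Type*} [Fintype X] [DecidableEq X]
    (P : X → ℝ) (hP0 : ∀ x, 0 ≤ P x) (hP1 : ∑ x, P x = 1)
    (k l : ℕ)
    (B : Fin k → Fin l) (hB : Function.Surjective B) :
    ∑ x ∈ Finset.univ.filter (fun x : Fin k → X => ∀ i j, x i = x j ↔ B i = B j),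
        ∏ i, P (x i)
      ≤ ∑ x : X, P x ^ (k - l + 1) := by
  set m : Fin l → ℕ := fun b => #{i | B i = b}
  have h_fiber_const : ∀ x ∈ univ.filter (fun x : Fin k → X => ∀ i j, x i = x j ↔ B i = B j),
      ∀ i j, B i = B j → x i = x j := fun x hx i j => ((mem_filter.1 hx).2 i j).2
  calc _ ≤ ∑ y : Fin l → X, ∏ i, P (y (B i)) :=
        sum_le_sum_comp_of_forall_fiber_const hB h_fiber_const (fun x => ∏ i, P (x i))
          fun x => prod_nonneg fun i _ => hP0 _
    _ = ∏ b, ∑ x, P x ^ m b := by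
        rw [Fintype.prod_sum]
        exact sum_congr rfl fun y _ => prod_comp_eq_prod_pow_card_fiber B (P ∘ y)
    _ = ∏ b, ∑ x, P x ^ (m b - 1 + 1) := by
        simp only [m, Nat.sub_add_cancel (card_fiber_pos hB _)]
    _ ≤ ∑ x, P x ^ (∑ b, (m b - 1) + 1) := prod_sum_pow_succ_le hP0 hP1 _ _
    _ = ∑ x : X, P x ^ (k - l + 1) := by
        rw [sum_card_fiber_sub_one hB, Fintype.card_fin, Fintype.card_fin]

/-- Partition-pattern probability bound: for a pmf `P_X` on a finite set, a surjection
`B : Fin k → Fin l` encoding a partition of `{1,…,k}` into `l` nonempty blocks, and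
`T_B` the set of `k`-tuples whose coincidence pattern matches `B`, one has
`∑_{x ∈ T_B} ∏ᵢ P_X(xᵢ) ≤ ∑_x P_X(x)^{k-l+1}` (the right side equals `1` when `l = k`). -/
theorem partition_pattern_prob_bound {X : Type*} [Fintype X] [DecidableEq X]
    (P : X → ℝ) (hP0 : ∀ x, 0 ≤ P x) (hP1 : ∑ x, P x = 1)
    (k l : ℕ) (hk : 2 ≤ k) (hl1 : 1 ≤ l) (hlk : l ≤ k)
    (B : Fin k → Fin l) (hB : Function.Surjective B) :
    ∑ x ∈ Finset.univ.filter (fun x : Fin k → X => ∀ i j, x i = x j ↔ B i = B j),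
        ∏ i, P (x i)
      ≤ ∑ x : X, P x ^ (k - l + 1) :=
  partition_pattern_prob_bound_general P hP0 hP1 k l B hB
end

section
/- For any $\lambda > 0$ and any positive integer $k$, one has $\sum_{l=1}^{k} S(k,l)\,\lambda^{l-k} \le \exp\big(k^2/(2\lambda)\big)$, where $S(k,l)$ is the Stirling number of the second kind. -/
/-- Stirling numbers of the second kind: `stirling2 k l` is the number of partitions of a
`k`-element set into `l` nonempty blocks. -/
def stirling2 : ℕ → ℕ → ℕ
  | 0, 0 => 1
  | 0, _ + 1 => 0
  | _ + 1, 0 => 0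
  | n + 1, l + 1 => (l + 1) * stirling2 n (l + 1) + stirling2 n l

lemma stirling2_self : ∀ n, stirling2 n n = 1
  | 0 => rfl
  | n + 1 => by
    show (n + 1) * stirling2 n (n + 1) + stirling2 n n = 1
    have h : ∀ m j, m < j → stirling2 m j = 0 := by
      intro m
      induction m with
      | zero => intro j hj; obtain ⟨i, rfl⟩ : ∃ i, j = i + 1 := ⟨j - 1, by omega⟩; rfl
      | succ m ih =>
        intro j hj
        obtain ⟨i, rfl⟩ : ∃ i, j = i + 1 := ⟨j - 1, by omega⟩
        show (i + 1) * stirling2 m (i + 1) + stirling2 m i = 0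
        rw [ih _ (by omega), ih _ (by omega)]
        simp
    rw [h n (n + 1) (by omega), stirling2_self n]
    simp

lemma pow_add_le_aux (a c : ℝ) (ha : 0 ≤ a) (hc : 0 ≤ c) :
    ∀ j : ℕ, a ^ (j + 1) + (j + 1 : ℝ) * a ^ j * c ≤ (a + c) ^ (j + 1) := by
  intro j
  induction j with
  | zero => simp
  | succ j ih =>
    have h1 : (a + c) ^ (j + 2) = (a + c) * (a + c) ^ (j + 1) := by ring
    have h2 : (a + c) * (a ^ (j + 1) + (j + 1 : ℝ) * a ^ j * c) ≤ (a + c) * (a + c) ^ (j + 1) :=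
      mul_le_mul_of_nonneg_left ih (by linarith)
    have key : (a + c) * (a ^ (j + 1) + (j + 1 : ℝ) * a ^ j * c)
        = a ^ (j + 2) + ((j : ℝ) + 2) * a ^ (j + 1) * c + ((j : ℝ) + 1) * a ^ j * c ^ 2 := by
      ring
    rw [key] at h2
    have hpa : (0:ℝ) ≤ a ^ j := pow_nonneg ha j
    have hnn : (0:ℝ) ≤ ((j : ℝ) + 1) * a ^ j * c ^ 2 := by positivity
    push_cast
    linarith [h2, hnn]

lemma stirling2_key : ∀ (k j : ℕ), j ≤ k →
    (Nat.factorial j : ℝ) * (stirling2 k (k - j) : ℝ) ≤ ((k : ℝ) ^ 2 / 2) ^ j := by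
  intro k
  induction k with
  | zero => intro j hj; interval_cases j; simp [stirling2]
  | succ k ih =>
    intro j hj
    rcases Nat.eq_zero_or_pos j with h0 | h1
    · subst h0; simp [stirling2_self]
    rcases eq_or_lt_of_le hj with he | hlt
    · have : k + 1 - j = 0 := by omega
      rw [this]
      have h0 : stirling2 (k + 1) 0 = 0 := rfl
      rw [h0]
      simp
      positivity
    · have hjk : j ≤ k := Nat.lt_succ_iff.mp hlt
      obtain ⟨i, rfl⟩ : ∃ i, j = i + 1 := ⟨j - 1, by omega⟩
      have hsub : k + 1 - (i + 1) = (k - (i + 1)) + 1 := by omega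
      rw [hsub]
      have hrec : stirling2 (k + 1) ((k - (i + 1)) + 1)
          = ((k - (i + 1)) + 1) * stirling2 k ((k - (i + 1)) + 1) + stirling2 k (k - (i + 1)) := rfl
      have h2 : (k - (i + 1)) + 1 = k - i := by omega
      rw [hrec, h2]
      have ih1 := ih i (by omega)
      have ih2 := ih (i + 1) hjk
      have hfac : (Nat.factorial (i + 1) : ℝ) = (i + 1 : ℝ) * (Nat.factorial i : ℝ) := by
        rw [Nat.factorial_succ]; push_cast; ring
      have ha : (0:ℝ) ≤ (k : ℝ) ^ 2 / 2 := by positivity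
      have hc : (0:ℝ) ≤ (2 * (k : ℝ) + 1) / 2 := by positivity
      have hpow := pow_add_le_aux ((k : ℝ) ^ 2 / 2) ((2 * (k : ℝ) + 1) / 2) ha hc i
      have hsum : ((k : ℝ) ^ 2 / 2 + (2 * (k : ℝ) + 1) / 2) = ((k : ℝ) + 1) ^ 2 / 2 := by ring
      rw [hsum] at hpow
      have hki : ((k - i : ℕ) : ℝ) = (k : ℝ) - (i : ℝ) := by
        push_cast [Nat.cast_sub (by omega : i ≤ k)]; ring
      push_cast
      rw [hki]
      -- LHS: (i+1)! * ((k - i) * S(k, k-i) + S(k, k-(i+1)))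
      have hS1 : (Nat.factorial i : ℝ) * (stirling2 k (k - i) : ℝ) ≤ ((k : ℝ) ^ 2 / 2) ^ i := ih1
      have hS2 : (Nat.factorial (i + 1) : ℝ) * (stirling2 k (k - (i + 1)) : ℝ)
          ≤ ((k : ℝ) ^ 2 / 2) ^ (i + 1) := ih2
      have hfn : (0:ℝ) ≤ (Nat.factorial i : ℝ) := by positivity
      have hSn : (0:ℝ) ≤ (stirling2 k (k - i) : ℝ) := by positivity
      have hik : (i : ℝ) ≤ (k : ℝ) := by exact_mod_cast (by omega : i ≤ k)
      have hpi : (0:ℝ) ≤ ((k : ℝ) ^ 2 / 2) ^ i := by positivity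
      rw [hfac] at hS2 ⊢
      have hi0 : (0:ℝ) ≤ (i : ℝ) := by positivity
      have hb : (0:ℝ) ≤ ((i:ℝ) + 1) * ((k:ℝ) - (i:ℝ)) := by nlinarith
      have hm := mul_le_mul_of_nonneg_left hS1 hb
      have hc2 : ((i:ℝ) + 1) * ((k:ℝ) - (i:ℝ)) * (((k:ℝ)^2/2) ^ i)
          ≤ ((i:ℝ) + 1) * ((2 * (k:ℝ) + 1) / 2) * (((k:ℝ)^2/2) ^ i) := by
        apply mul_le_mul_of_nonneg_right _ hpi
        nlinarith
      calc ((i:ℝ) + 1) * (Nat.factorial i : ℝ)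
            * (((k:ℝ) - (i:ℝ)) * (stirling2 k (k - i) : ℝ) + (stirling2 k (k - (i + 1)) : ℝ))
          = ((i:ℝ) + 1) * ((k:ℝ) - (i:ℝ)) * ((Nat.factorial i : ℝ) * (stirling2 k (k - i) : ℝ))
            + ((i:ℝ) + 1) * (Nat.factorial i : ℝ) * (stirling2 k (k - (i + 1)) : ℝ) := by ring
        _ ≤ ((i:ℝ) + 1) * ((k:ℝ) - (i:ℝ)) * (((k:ℝ)^2/2) ^ i) + ((k:ℝ)^2/2) ^ (i + 1) :=
            add_le_add hm hS2
        _ ≤ ((i:ℝ) + 1) * ((2 * (k:ℝ) + 1) / 2) * (((k:ℝ)^2/2) ^ i) + ((k:ℝ)^2/2) ^ (i + 1) := by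
            linarith [hc2]
        _ ≤ (((k:ℝ) + 1) ^ 2 / 2) ^ (i + 1) := by linarith [hpow]

/-- Normalized Poisson moment bound: `∑_{l=1}^k S(k,l) λ^{l-k} ≤ exp(k²/(2λ))`. -/
theorem stirling_poisson_moment_bound (lam : ℝ) (hlam : 0 < lam) (k : ℕ) (hk : 1 ≤ k) :
    ∑ l ∈ Finset.Icc 1 k, (stirling2 k l : ℝ) * lam ^ ((l : ℝ) - (k : ℝ))
      ≤ Real.exp ((k : ℝ) ^ 2 / (2 * lam)) := by
  set x : ℝ := (k : ℝ) ^ 2 / (2 * lam) with hxdef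
  have hx : 0 ≤ x := by positivity
  have step1 : ∑ l ∈ Finset.Icc 1 k, (stirling2 k l : ℝ) * lam ^ ((l : ℝ) - (k : ℝ))
      ≤ ∑ l ∈ Finset.Icc 1 k, x ^ (k - l) / (Nat.factorial (k - l) : ℝ) := by
    apply Finset.sum_le_sum
    intro l hl
    rw [Finset.mem_Icc] at hl
    have hlk : l ≤ k := hl.2
    have hexp : (l : ℝ) - (k : ℝ) = -(((k - l : ℕ) : ℝ)) := by
      push_cast [Nat.cast_sub hlk]; ring
    rw [hexp, Real.rpow_neg hlam.le, Real.rpow_natCast]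
    have hkey := stirling2_key k (k - l) (by omega)
    have hsub : k - (k - l) = l := by omega
    rw [hsub] at hkey
    have hfpos : (0:ℝ) < (Nat.factorial (k - l) : ℝ) := by positivity
    have hlampow : (0:ℝ) < lam ^ (k - l) := pow_pos hlam _
    have hS : (stirling2 k l : ℝ) ≤ ((k : ℝ) ^ 2 / 2) ^ (k - l) / (Nat.factorial (k - l) : ℝ) := by
      rw [le_div_iff₀ hfpos]; linarith [hkey]
    have hxd : x = ((k : ℝ) ^ 2 / 2) / lam := by rw [hxdef]; ring
    have hxpow : x ^ (k - l) = ((k : ℝ) ^ 2 / 2) ^ (k - l) / lam ^ (k - l) := by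
      rw [hxd, div_pow]
    calc (stirling2 k l : ℝ) * (lam ^ (k - l))⁻¹
        ≤ (((k : ℝ) ^ 2 / 2) ^ (k - l) / (Nat.factorial (k - l) : ℝ)) * (lam ^ (k - l))⁻¹ :=
          mul_le_mul_of_nonneg_right hS (by positivity)
      _ = x ^ (k - l) / (Nat.factorial (k - l) : ℝ) := by rw [hxpow]; ring
  have step2 : ∑ l ∈ Finset.Icc 1 k, x ^ (k - l) / (Nat.factorial (k - l) : ℝ)
      = ∑ j ∈ Finset.range k, x ^ j / (Nat.factorial j : ℝ) := by
    apply Finset.sum_nbij' (fun l => k - l) (fun j => k - j)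
    · intro a ha; rw [Finset.mem_Icc] at ha; rw [Finset.mem_range]; omega
    · intro b hb; rw [Finset.mem_range] at hb; rw [Finset.mem_Icc]; omega
    · intro a ha; rw [Finset.mem_Icc] at ha; omega
    · intro b hb; rw [Finset.mem_range] at hb; omega
    · intro a _; rfl
  calc ∑ l ∈ Finset.Icc 1 k, (stirling2 k l : ℝ) * lam ^ ((l : ℝ) - (k : ℝ))
      ≤ ∑ l ∈ Finset.Icc 1 k, x ^ (k - l) / (Nat.factorial (k - l) : ℝ) := step1
    _ = ∑ j ∈ Finset.range k, x ^ j / (Nat.factorial j : ℝ) := step2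
    _ ≤ Real.exp x := Real.sum_le_exp_of_nonneg hx k
end

section
/- Let $h : \mathcal{S}\times\mathcal{X} \to \mathbb{Z}_q^m$ be a 2-universal hash function, i.e., for all distinct $x_1 \ne x_2$, $\Pr_{S}[h(S,x_1)=h(S,x_2)] \le q^{-m}$ where $S$ is uniform on $\mathcal{S}$. Let $X$ be a random variable on $\mathcal{X}$ independent of $S$, and $U$ uniform on $\mathbb{Z}_q^m$. Then $q^{D_2(P_{(h(S,X),S)} \| P_U \times P_S)} \le 1 + q^{m - H_2(X)}$, where $H_2(X) = -\log_q \sum_x P_X(x)^2$ is the collision entropy. -/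
/-!
Expanding the square, the collision probability of `(h(S,X), S)` is
`|𝒮|⁻¹ ∑_{x,y} P(x) P(y) Pr_S[h(S,x) = h(S,y)]`. By 2-universality the collision kernel is at
most `[x = y] + q^{-m}`, so against the uniform reference measure the order-2 divergence sum is
at most `q^m (∑ P(x)² + q^{-m}) = 1 + q^{m - H₂(X)}`.
-/

open Finset

/-- Joint pmf of the pair `(h(S,X), S)` where `S` is uniform on `𝒮` and `X ~ P` is
independent of `S`. -/
noncomputable def jointPMF {S X : Type*} [Fintype S] [Fintype X] {q m : ℕ}
    (h : S → X → (Fin m → Fin q)) (P : X → ℝ) : (Fin m → Fin q) × S → ℝ :=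
  fun p => (Fintype.card S : ℝ)⁻¹ * ∑ x : X, if h p.2 x = p.1 then P x else 0

/-- `logb b 0 = 0`, so at `T = 0` the left side is `1`. -/
theorem Real.rpow_logb_le_of_le {b T B : ℝ} (hb : 1 < b) (hT : 0 ≤ T) (hTB : T ≤ B)
    (hB : 1 ≤ B) : b ^ Real.logb b T ≤ B := by
  rcases hT.eq_or_lt with rfl | hT
  · simpa using hB
  · rwa [Real.rpow_logb (by linarith) hb.ne' hT]

theorem sum_sq_pos_of_sum_eq_one {X : Type*} [Fintype X] {P : X → ℝ} (hP1 : ∑ x, P x = 1) :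
    0 < ∑ x, P x ^ 2 := by
  obtain ⟨x, -, hx⟩ := exists_ne_zero_of_sum_ne_zero (hP1 ▸ one_ne_zero : ∑ x, P x ≠ 0)
  exact sum_pos' (fun x _ => sq_nonneg (P x)) ⟨x, mem_univ x, by positivity⟩

theorem sum_sum_mul_le_sum_sq_add {X : Type*} [Fintype X] [DecidableEq X] {P : X → ℝ}
    (hP0 : ∀ x, 0 ≤ P x) (hP1 : ∑ x, P x = 1) {K : X → X → ℝ} {ε : ℝ}
    (hK : ∀ x y, K x y ≤ (if x = y then 1 else 0) + ε) :
    ∑ x, ∑ y, P x * P y * K x y ≤ ∑ x, P x ^ 2 + ε := by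
  calc ∑ x, ∑ y, P x * P y * K x y
      ≤ ∑ x, ∑ y, P x * P y * ((if x = y then 1 else 0) + ε) := by
        gcongr with x _ y _
        · exact mul_nonneg (hP0 x) (hP0 y)
        · exact hK x y
    _ = ∑ x, P x ^ 2 + ε * (∑ x, P x) ^ 2 := by
        simp [mul_add, sum_add_distrib, sq, mul_sum, mul_comm]
    _ = ∑ x, P x ^ 2 + ε := by rw [hP1, one_pow, mul_one]

theorem sum_sq_sum_ite_eq {X Y : Type*} [Fintype X] [Fintype Y] [DecidableEq Y]
    (f : X → Y) (P : X → ℝ) :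
    ∑ u, (∑ x, if f x = u then P x else 0) ^ 2
      = ∑ x, ∑ y, if f x = f y then P x * P y else 0 := by
  simp_rw [sq, sum_mul_sum]
  rw [sum_comm]
  refine sum_congr rfl fun x _ => ?_
  rw [sum_comm]
  refine sum_congr rfl fun y _ => ?_
  simp [eq_comm]

section Collision

variable {S X Y : Type*} [Fintype S] [DecidableEq Y]

noncomputable def collisionProb (h : S → X → Y) (x y : X) : ℝ :=
  ((univ.filter fun s : S => h s x = h s y).card : ℝ) / (Fintype.card S : ℝ)

theorem collisionProb_self [Nonempty S] (h : S → X → Y) (x : X) : collisionProb h x x = 1 := by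
  simp [collisionProb]

theorem collisionProb_le_ite_add [Nonempty S] [DecidableEq X] {h : S → X → Y} {ε : ℝ}
    (hε : 0 ≤ ε) (hUniv : ∀ x y, x ≠ y → collisionProb h x y ≤ ε) (x y : X) :
    collisionProb h x y ≤ (if x = y then 1 else 0) + ε := by
  split_ifs with hxy
  · rw [hxy, collisionProb_self]; linarith
  · rw [zero_add]; exact hUniv x y hxy

end Collision

theorem sum_sq_jointPMF {S X : Type*} [Fintype S] [Fintype X] {q m : ℕ}
    (h : S → X → (Fin m → Fin q)) (P : X → ℝ) :
    ∑ z, jointPMF h P z ^ 2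
      = (Fintype.card S : ℝ)⁻¹ * ∑ x, ∑ y, P x * P y * collisionProb h x y := by
  have hfiber : ∀ x y, ∑ s : S, (if h s x = h s y then P x * P y else 0)
      = P x * P y * (univ.filter fun s : S => h s x = h s y).card := fun x y => by
    rw [← sum_filter, sum_const, nsmul_eq_mul, mul_comm]
  rw [Fintype.sum_prod_type, sum_comm]
  simp_rw [jointPMF, mul_pow, ← mul_sum, sum_sq_sum_ite_eq]
  rw [sum_comm]
  simp_rw [sum_comm (s := (univ : Finset S)), hfiber, collisionProb, mul_div, ← sum_div]
  ring

theorem lhl_order_two_general {S X : Type*} [Fintype S] [Fintype X] [Nonempty S]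
    (q m : ℕ) (hq : 2 ≤ q)
    (h : S → X → (Fin m → Fin q)) (P : X → ℝ)
    (hP0 : ∀ x, 0 ≤ P x) (hP1 : ∑ x, P x = 1)
    (hUniv : ∀ x₁ x₂ : X, x₁ ≠ x₂ →
      ((univ.filter fun s : S => h s x₁ = h s x₂).card : ℝ) / (Fintype.card S : ℝ)
        ≤ ((q : ℝ) ^ m)⁻¹) :
    (q : ℝ) ^ (Real.logb q (∑ z : (Fin m → Fin q) × S,
        (jointPMF h P z) ^ 2 / (((q : ℝ) ^ m)⁻¹ * (Fintype.card S : ℝ)⁻¹)))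
      ≤ 1 + (q : ℝ) ^ ((m : ℝ) - (-Real.logb q (∑ x, P x ^ 2))) := by
  classical
  have hq1 : (1 : ℝ) < q := by exact_mod_cast hq
  have hS : (Fintype.card S : ℝ) ≠ 0 := by positivity
  have hcoll := collisionProb_le_ite_add (by positivity) hUniv
  have hD2 : ∑ z, jointPMF h P z ^ 2 / (((q : ℝ) ^ m)⁻¹ * (Fintype.card S : ℝ)⁻¹)
      ≤ 1 + (q : ℝ) ^ m * ∑ x, P x ^ 2 :=
    calc ∑ z, jointPMF h P z ^ 2 / (((q : ℝ) ^ m)⁻¹ * (Fintype.card S : ℝ)⁻¹)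
        = (q : ℝ) ^ m * ∑ x, ∑ y, P x * P y * collisionProb h x y := by
          rw [← sum_div, sum_sq_jointPMF]; field_simp
      _ ≤ (q : ℝ) ^ m * (∑ x, P x ^ 2 + ((q : ℝ) ^ m)⁻¹) := by
          gcongr; exact sum_sum_mul_le_sum_sq_add hP0 hP1 hcoll
      _ = 1 + (q : ℝ) ^ m * ∑ x, P x ^ 2 := by field_simp; ring
  rw [sub_neg_eq_add, Real.rpow_add (by positivity), Real.rpow_natCast,
    Real.rpow_logb (by positivity) hq1.ne' (sum_sq_pos_of_sum_eq_one hP1)]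
  exact Real.rpow_logb_le_of_le hq1 (by positivity) hD2
    (le_add_of_nonneg_right (by positivity))

/-- Leftover hash lemma, order-2 bound: for a 2-universal hash function,
`q^{D₂(P_{(h(S,X),S)} ‖ P_U × P_S)} ≤ 1 + q^{m - H₂(X)}`. -/
theorem lhl_order_two {S X : Type*} [Fintype S] [Fintype X] [Nonempty S] [Nonempty X]
    (q m : ℕ) (hq : 2 ≤ q) (hm : 1 ≤ m)
    (h : S → X → (Fin m → Fin q)) (P : X → ℝ)
    (hP0 : ∀ x, 0 ≤ P x) (hP1 : ∑ x, P x = 1)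
    (hUniv : ∀ x₁ x₂ : X, x₁ ≠ x₂ →
      ((univ.filter fun s : S => h s x₁ = h s x₂).card : ℝ) / (Fintype.card S : ℝ)
        ≤ ((q : ℝ) ^ m)⁻¹) :
    (q : ℝ) ^ (Real.logb q (∑ z : (Fin m → Fin q) × S,
        (jointPMF h P z) ^ 2 / (((q : ℝ) ^ m)⁻¹ * (Fintype.card S : ℝ)⁻¹)))
      ≤ 1 + (q : ℝ) ^ ((m : ℝ) - (-Real.logb q (∑ x, P x ^ 2))) :=
  lhl_order_two_general q m hq h P hP0 hP1 hUniv
end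

section
/- Let $k \ge 2$ be an integer and let $h:\mathcal S\times\mathcal X\to\mathbb Z_q^m$ be $k^*$-universal, meaning that for every $l \in \{2,\dots,k\}$ and every $l$-tuple of distinct inputs $x_1,\dots,x_l$, $\Pr_{S}[h(S,x_1)=\cdots=h(S,x_l)] \le q^{-m(l-1)}$ with $S$ uniform on $\mathcal S$. Let $X$ be a random variable on $\mathcal X$ independent of $S$ and $U$ uniform on $\mathbb Z_q^m$. Then $q^{(k-1)D_k(P_{(h(S,X),S)}\|P_U\times P_S)} \le \sum_{l=1}^{k} S(k,l)\, q^{(k-l)(m - H_k(X))}$, where $S(k,l)$ are Stirling numbers of the second kind and $H_k(X) = \frac{1}{1-k}\log_q\sum_x P_X(x)^k$. -/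
open Finset

/-- Rényi divergence of order `α > 1` (base-`q` logarithm). -/
noncomputable def renyiD {Z : Type*} [Fintype Z] (q : ℕ) (α : ℝ) (P Q : Z → ℝ) : ℝ :=
  (α - 1)⁻¹ * Real.logb q (∑ z, P z ^ α * Q z ^ (1 - α))

/-- Rényi entropy of order `α > 1` (base-`q` logarithm). -/
noncomputable def renyiH {X : Type*} [Fintype X] (q : ℕ) (α : ℝ) (P : X → ℝ) : ℝ :=
  (1 - α)⁻¹ * Real.logb q (∑ x, P x ^ α)


/-!
Expanding the `k`-th power of the joint pmf turns `q^{(k-1) D_k}` into a sum over `k`-tuples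
`g` of inputs, weighted by `∏ P (g i)` and by the probability that `h S` collapses the tuple.
By `k*`-universality a tuple with `l` distinct entries collapses with probability at most
`q^{-m(l-1)}`. The tuples with `l` distinct entries are grouped by the partition of the
indices into `l` blocks of equal entries; a block of size `b` contributes at most
`∑ P^b ≤ (∑ P^k)^{(b-1)/(k-1)} = q^{-(b-1) H_k}` (power-mean inequality), and there are
`S(k, l)` such partitions.
-/

theorem stirling2_eq_stirlingSecond : stirling2 = Nat.stirlingSecond := by
  funext n l
  induction n generalizing l with
  | zero => cases l <;> rfl
  | succ n ih => cases l <;> simp [stirling2, Nat.stirlingSecond_succ_succ, ih]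

theorem Finset.sum_powerset_stirlingSecond_card {α : Type*} [DecidableEq α]
    (s : Finset α) (t : ℕ) :
    ∑ C ∈ s.powerset, Nat.stirlingSecond #C t = Nat.stirlingSecond (#s + 1) (t + 1) := by
  induction s using Finset.induction_on generalizing t with
  | empty => simp [Nat.stirlingSecond_succ_succ]
  | insert a s ha ih =>
    rw [sum_powerset_insert ha, card_insert_of_notMem ha, ih]
    have hcard : ∀ C ∈ s.powerset, #(insert a C) = #C + 1 := fun C hC =>
      card_insert_of_notMem fun haC => ha (mem_powerset.mp hC haC)
    rw [sum_congr rfl fun C hC => by rw [hcard C hC]]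
    cases t with
    | zero => simp [Nat.stirlingSecond_succ_succ]
    | succ u =>
      rw [sum_congr rfl fun C _ => Nat.stirlingSecond_succ_succ #C u, sum_add_distrib,
        ← mul_sum, ih, ih, Nat.stirlingSecond_succ_succ (#s + 1) (u + 1)]
      ring

theorem Finset.card_image_univ_mem_Icc {ι α : Type*} [Fintype ι] [Nonempty ι] [DecidableEq α]
    (g : ι → α) : #(univ.image g) ∈ Icc 1 (Fintype.card ι) :=
  mem_Icc.mpr ⟨card_pos.mpr (univ_nonempty.image g), card_image_le⟩

theorem Finset.univ_image_restrict_eq_erase {ι α : Type*} [Fintype ι] [DecidableEq α]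
    {g : ι → α} {i₀ : ι} {C : Finset ι} (hC : ∀ i, i ∈ C ↔ g i ≠ g i₀) :
    univ.image (fun i : C => g i) = (univ.image g).erase (g i₀) := by
  ext x
  simp only [mem_image, mem_erase, mem_univ, true_and, Subtype.exists]
  constructor
  · rintro ⟨i, hi, rfl⟩
    exact ⟨(hC i).mp hi, i, rfl⟩
  · rintro ⟨hx, i, rfl⟩
    exact ⟨i, (hC i).mpr hx, rfl⟩

section PowerSums

variable {X : Type*} [Fintype X]

theorem sum_pow_pos {P : X → ℝ} (hP0 : ∀ x, 0 ≤ P x) (hP : ∑ x, P x ≠ 0) (k : ℕ) :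
    0 < ∑ x, P x ^ k := by
  obtain ⟨x, -, hx⟩ := exists_ne_zero_of_sum_ne_zero hP
  exact sum_pos' (fun x _ => pow_nonneg (hP0 x) k)
    ⟨x, mem_univ x, pow_pos ((hP0 x).lt_of_ne' hx) k⟩

noncomputable def renyiScale (k : ℕ) (P : X → ℝ) : ℝ := (∑ x, P x ^ k) ^ ((k : ℝ) - 1)⁻¹

theorem renyiScale_nonneg {P : X → ℝ} (hP0 : ∀ x, 0 ≤ P x) (k : ℕ) : 0 ≤ renyiScale k P :=
  Real.rpow_nonneg (sum_nonneg fun x _ => pow_nonneg (hP0 x) k) _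

theorem renyiScale_eq_rpow_neg_renyiH {q : ℕ} (hq : 1 < q) {k : ℕ} {P : X → ℝ}
    (hP : 0 < ∑ x, P x ^ k) : renyiScale k P = (q : ℝ) ^ (-renyiH q k P) := by
  have hq' : (1 : ℝ) < q := by exact_mod_cast hq
  simp only [renyiH, Real.rpow_natCast]
  rw [← neg_mul, ← inv_neg, neg_sub, mul_comm, Real.rpow_mul (by positivity),
    Real.rpow_logb (by positivity) hq'.ne' hP, renyiScale]

theorem sum_pow_le_renyiScale_pow {P : X → ℝ} (hP0 : ∀ x, 0 ≤ P x) (hP1 : ∑ x, P x = 1)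
    {b k : ℕ} (hb : 1 ≤ b) (hbk : b ≤ k) : ∑ x, P x ^ b ≤ renyiScale k P ^ (b - 1) := by
  obtain rfl | hb := hb.eq_or_lt
  · simp [hP1]
  have hb' : ((b - 1 : ℕ) : ℝ) ≠ 0 := Nat.cast_ne_zero.mpr (by omega)
  have hbk' : ((b - 1 : ℕ) : ℝ) ≤ (k - 1 : ℕ) := by gcongr
  have key := Real.arith_mean_le_rpow_mean univ P (fun x => P x ^ (b - 1)) (fun x _ => hP0 x) hP1
    (fun x _ => pow_nonneg (hP0 x) _) ((one_le_div₀ (by positivity)).mpr hbk')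
  convert key using 1
  · refine sum_congr rfl fun x _ => ?_
    rw [← pow_succ', Nat.sub_add_cancel hb.le]
  · rw [renyiScale, ← Real.rpow_natCast _ (b - 1),
      ← Real.rpow_mul (sum_nonneg fun x _ => pow_nonneg (hP0 x) _)]
    congr 1
    · refine sum_congr rfl fun x _ => ?_
      rw [← Real.rpow_natCast (P x) (b - 1), ← Real.rpow_mul (hP0 x), mul_div_cancel₀ _ hb',
        Real.rpow_natCast, ← pow_succ', Nat.sub_add_cancel (by omega)]
    · rw [Nat.cast_sub (by omega : 1 ≤ k), Nat.cast_one]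
      field_simp

variable [DecidableEq X]

theorem sum_prod_of_filter_ne_eq_le {ι : Type*} [Fintype ι] [DecidableEq ι] {P : X → ℝ}
    (hP0 : ∀ x, 0 ≤ P x) (i₀ : ι) (C : Finset ι) (t : ℕ) :
    ∑ g : ι → X with #(univ.image g) = t + 1 ∧ univ.filter (fun i => g i ≠ g i₀) = C,
        ∏ i, P (g i)
      ≤ (∑ y, P y ^ #Cᶜ) * ∑ g : C → X with #(univ.image g) = t, ∏ i, P (g i) := by
  set F := univ.filter fun g : ι → X =>
    #(univ.image g) = t + 1 ∧ univ.filter (fun i => g i ≠ g i₀) = C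
  have hC : ∀ g ∈ F, ∀ i, i ∈ C ↔ g i ≠ g i₀ := by
    intro g hg i
    rw [← (mem_filter.mp hg).2.2, mem_filter, and_iff_right (mem_univ i)]
  have hconst : ∀ g ∈ F, ∀ i ∉ C, g i = g i₀ := fun g hg i hi =>
    not_not.mp (mt (hC g hg i).mpr hi)
  set φ : (ι → X) → X × (C → X) := fun g => (g i₀, fun i => g i)
  have hφ_inj : Set.InjOn φ F := by
    intro g hg g' hg' hgg'
    simp only [φ, Prod.mk.injEq] at hgg'
    funext i
    by_cases hi : i ∈ C
    · exact congrFun hgg'.2 ⟨i, hi⟩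
    · rw [hconst g hg i hi, hconst g' hg' i hi, hgg'.1]
  have hφ_maps : ∀ g ∈ F, φ g ∈ univ ×ˢ univ.filter fun g' : C → X => #(univ.image g') = t := by
    intro g hg
    simp only [mem_product, mem_univ, mem_filter, true_and, φ]
    rw [univ_image_restrict_eq_erase (hC g hg),
      card_erase_of_mem (mem_image_of_mem g (mem_univ i₀)), (mem_filter.mp hg).2.1,
      Nat.add_sub_cancel]
  have hφ_prod : ∀ g ∈ F, ∏ i, P (g i) = P (g i₀) ^ #Cᶜ * ∏ i : C, P (g i) := by
    intro g hg
    rw [← prod_mul_prod_compl C, mul_comm, prod_coe_sort C (fun i => P (g i)),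
      prod_congr rfl fun i hi => by rw [hconst g hg i (mem_compl.mp hi)], prod_const]
  calc ∑ g ∈ F, ∏ i, P (g i)
      = ∑ p ∈ F.image φ, P p.1 ^ #Cᶜ * ∏ i, P (p.2 i) := by
        rw [sum_image hφ_inj]
        exact sum_congr rfl hφ_prod
    _ ≤ ∑ p ∈ univ ×ˢ univ.filter fun g' : C → X => #(univ.image g') = t,
          P p.1 ^ #Cᶜ * ∏ i, P (p.2 i) :=
        sum_le_sum_of_subset_of_nonneg (image_subset_iff.mpr hφ_maps) fun p _ _ =>
          mul_nonneg (pow_nonneg (hP0 _) _) (prod_nonneg fun i _ => hP0 _)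
    _ = _ := by rw [sum_product, sum_mul_sum]

theorem sum_prod_card_image_succ_le {ι : Type*} [Fintype ι] [DecidableEq ι] {P : X → ℝ}
    (hP0 : ∀ x, 0 ≤ P x) (i₀ : ι) (t : ℕ) :
    ∑ g : ι → X with #(univ.image g) = t + 1, ∏ i, P (g i)
      ≤ ∑ C ∈ (univ.erase i₀).powerset,
          (∑ y, P y ^ #Cᶜ) * ∑ g : C → X with #(univ.image g) = t, ∏ i, P (g i) := by
  have hfiber : ∀ g ∈ univ.filter fun g : ι → X => #(univ.image g) = t + 1,
      univ.filter (fun i => g i ≠ g i₀) ∈ (univ.erase i₀).powerset := fun g _ => by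
    simp only [mem_powerset, subset_iff, mem_filter, mem_erase]
    exact fun i hi => ⟨fun h => hi.2 (h ▸ rfl), mem_univ i⟩
  -- split the tuples according to the set `C` of indices whose entry differs from the one at `i₀`
  rw [← sum_fiberwise_of_maps_to hfiber]
  simp_rw [filter_filter]
  exact sum_le_sum fun C _ => sum_prod_of_filter_ne_eq_le hP0 i₀ C t

theorem sum_prod_card_image_le {P : X → ℝ} (hP0 : ∀ x, 0 ≤ P x) (hP1 : ∑ x, P x = 1) {k : ℕ}
    {ι : Type*} [Fintype ι] [DecidableEq ι] (hι : Fintype.card ι ≤ k) (l : ℕ) :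
    ∑ g : ι → X with #(univ.image g) = l, ∏ i, P (g i)
      ≤ Nat.stirlingSecond (Fintype.card ι) l * renyiScale k P ^ (Fintype.card ι - l) := by
  induction hn : Fintype.card ι using Nat.strong_induction_on generalizing ι l with
  | _ n ih =>
  obtain _ | n := n
  · have : IsEmpty ι := Fintype.card_eq_zero_iff.mp hn
    cases l <;> simp
  obtain ⟨i₀⟩ : Nonempty ι := Fintype.card_pos_iff.mp (by omega)
  obtain _ | t := l
  · simp [(univ_nonempty_iff.mpr ⟨i₀⟩).ne_empty]
  calc ∑ g : ι → X with #(univ.image g) = t + 1, ∏ i, P (g i)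
      ≤ ∑ C ∈ (univ.erase i₀).powerset,
          (∑ y, P y ^ #Cᶜ) * ∑ g : C → X with #(univ.image g) = t, ∏ i, P (g i) :=
        sum_prod_card_image_succ_le hP0 i₀ t
    _ ≤ ∑ C ∈ (univ.erase i₀).powerset,
          (Nat.stirlingSecond #C t : ℝ) * renyiScale k P ^ (n - t) := by
        refine sum_le_sum fun C hC => ?_
        have hCn : #C ≤ n := by
          simpa [card_erase_of_mem, hn] using card_le_card (mem_powerset.mp hC)
        have hCc : #Cᶜ = n + 1 - #C := by rw [card_compl, hn]
        have hIH :=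
          ih #C (by omega) (ι := C) (by rw [Fintype.card_coe]; omega) t (Fintype.card_coe C)
        calc (∑ y, P y ^ #Cᶜ) * ∑ g : C → X with #(univ.image g) = t, ∏ i, P (g i)
            ≤ renyiScale k P ^ (#Cᶜ - 1) *
                (Nat.stirlingSecond #C t * renyiScale k P ^ (#C - t)) :=
              mul_le_mul (sum_pow_le_renyiScale_pow hP0 hP1 (by omega) (by omega)) hIH
                (sum_nonneg fun g _ => prod_nonneg fun i _ => hP0 _)
                (pow_nonneg (renyiScale_nonneg hP0 k) _)
          _ = Nat.stirlingSecond #C t * renyiScale k P ^ (n - t) := by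
            obtain htC | htC := le_or_gt t #C
            · rw [mul_left_comm, ← pow_add]
              congr 3
              omega
            · simp [Nat.stirlingSecond_eq_zero_of_lt htC]
    _ = Nat.stirlingSecond (n + 1) (t + 1) * renyiScale k P ^ (n + 1 - (t + 1)) := by
        rw [← sum_mul, ← Nat.cast_sum, sum_powerset_stirlingSecond_card,
          card_erase_of_mem (mem_univ i₀), card_univ, hn, Nat.add_sub_cancel,
          Nat.add_sub_add_right]

theorem sum_pow_sub_card_image_mul_prod_le {P : X → ℝ} (hP0 : ∀ x, 0 ≤ P x)
    (hP1 : ∑ x, P x = 1) {k : ℕ} [NeZero k] {Q : ℝ} (hQ : 0 ≤ Q) :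
    ∑ g : Fin k → X, Q ^ (k - #(univ.image g)) * ∏ i, P (g i)
      ≤ ∑ l ∈ Icc 1 k, Nat.stirlingSecond k l * (Q * renyiScale k P) ^ (k - l) := by
  have hmaps : ∀ g ∈ (univ : Finset (Fin k → X)), #(univ.image g) ∈ Icc 1 k := fun g _ => by
    simpa using card_image_univ_mem_Icc g
  rw [← sum_fiberwise_of_maps_to hmaps]
  refine sum_le_sum fun l _ => ?_
  calc ∑ g with #(univ.image g) = l, Q ^ (k - #(univ.image g)) * ∏ i, P (g i)
      = Q ^ (k - l) * ∑ g : Fin k → X with #(univ.image g) = l, ∏ i, P (g i) := by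
        rw [mul_sum]
        exact sum_congr rfl fun g hg => by rw [(mem_filter.mp hg).2]
    _ ≤ Q ^ (k - l) * (Nat.stirlingSecond k l * renyiScale k P ^ (k - l)) := by
        gcongr
        simpa using sum_prod_card_image_le hP0 hP1 (ι := Fin k) (card_fin k).le l
    _ = _ := by ring

end PowerSums

section Hashing

variable {S X : Type*} [Fintype S] {q m : ℕ} (h : S → X → (Fin m → Fin q))

def collisionSet {ι : Type*} [Fintype ι] (g : ι → X) : Finset S :=
  univ.filter fun s => ∀ i j, h s (g i) = h s (g j)

/-- `k*`-universality of `h`, with `S` uniform on `𝒮`. -/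
def IsStarUniversal (k : ℕ) : Prop :=
  ∀ l : ℕ, 2 ≤ l → l ≤ k → ∀ x : Fin l → X, Function.Injective x →
    (#(univ.filter fun s : S => ∀ i j, h s (x i) = h s (x j)) : ℝ) / Fintype.card S
      ≤ ((q : ℝ) ^ (m * (l - 1)))⁻¹

theorem mem_collisionSet {ι : Type*} [Fintype ι] {g : ι → X} {s : S} :
    s ∈ collisionSet h g ↔ ∀ x ∈ Set.range g, ∀ y ∈ Set.range g, h s x = h s y := by
  simp [collisionSet]

theorem collisionSet_congr {ι κ : Type*} [Fintype ι] [Fintype κ] {g : ι → X} {g' : κ → X}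
    (hgg' : Set.range g = Set.range g') : collisionSet h g = collisionSet h g' := by
  ext s
  rw [mem_collisionSet, mem_collisionSet, hgg']

theorem sum_ite_forall_eq_card_collisionSet_mul {ι : Type*} [Fintype ι] (i₀ : ι) (g : ι → X)
    (c : ℝ) : ∑ z : (Fin m → Fin q) × S, (if ∀ i, h z.2 (g i) = z.1 then c else 0)
      = #(collisionSet h g) * c := by
  rw [← sum_filter, sum_const, nsmul_eq_mul]
  congr 2
  refine card_nbij' Prod.snd (fun s => (h s (g i₀), s)) ?_ ?_ ?_ fun s _ => rfl
  · intro z hz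
    simp only [coe_filter, mem_univ, true_and, Set.mem_ofPred_eq, collisionSet] at hz ⊢
    exact fun i j => (hz i).trans (hz j).symm
  · intro s hs
    simp only [coe_filter, mem_univ, true_and, Set.mem_ofPred_eq, collisionSet] at hs ⊢
    exact fun i => hs i i₀
  · intro z hz
    simp only [coe_filter, mem_univ, true_and, Set.mem_ofPred_eq] at hz
    exact Prod.ext (hz i₀) rfl

theorem jointPMF_nonneg [Fintype X] {P : X → ℝ} (hP0 : ∀ x, 0 ≤ P x)
    (z : (Fin m → Fin q) × S) : 0 ≤ jointPMF h P z :=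
  mul_nonneg (by positivity) (sum_nonneg fun x _ => by split_ifs; exacts [hP0 x, le_rfl])

theorem sum_jointPMF [Fintype X] [Nonempty S] (P : X → ℝ) :
    ∑ z, jointPMF h P z = ∑ x, P x := by
  simp only [jointPMF, ← mul_sum, Fintype.sum_prod_type_right]
  rw [sum_congr rfl fun s _ => sum_comm]
  simp only [sum_ite_eq, mem_univ, if_true, sum_const, card_univ, nsmul_eq_mul]
  exact inv_mul_cancel_left₀ (by positivity) _

theorem sum_jointPMF_pow [Fintype X] (P : X → ℝ) (k : ℕ) [NeZero k] :
    ∑ z, jointPMF h P z ^ k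
      = (Fintype.card S : ℝ)⁻¹ ^ k * ∑ g : Fin k → X, #(collisionSet h g) * ∏ i, P (g i) := by
  simp only [jointPMF, mul_pow, ← mul_sum, Fintype.sum_pow, Fintype.prod_ite_zero]
  rw [sum_comm]
  simp only [sum_ite_forall_eq_card_collisionSet_mul h (0 : Fin k)]

variable {h} [DecidableEq X]

theorem IsStarUniversal.card_collisionSet_div_le {k : ℕ} (hh : IsStarUniversal h k)
    {ι : Type*} [Fintype ι] (g : ι → X) (hg : #(univ.image g) ≤ k) :
    (#(collisionSet h g) : ℝ) / Fintype.card S ≤ (((q : ℝ) ^ m) ^ (#(univ.image g) - 1))⁻¹ := by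
  set T := univ.image g
  obtain hT | hT := le_or_gt #T 1
  · rw [Nat.sub_eq_zero_of_le hT, pow_zero, inv_one]
    exact div_le_one_of_le₀ (mod_cast card_le_univ _) (Nat.cast_nonneg _)
  set x : Fin #T → X := fun j => T.equivFin.symm j
  have hx : Function.Injective x := Subtype.val_injective.comp T.equivFin.symm.injective
  have hrange : Set.range x = Set.range g := by
    rw [Set.range_comp' Subtype.val, T.equivFin.symm.surjective.range_eq, Set.image_univ,
      Subtype.range_coe, coe_image, coe_univ, Set.image_univ]
  rw [← collisionSet_congr h hrange, ← pow_mul]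
  convert hh #T hT hg x hx using 4
  -- the two filters differ only in their `Decidable` instances
  exact filter_congr_decidable _ _ _

theorem IsStarUniversal.sum_jointPMF_pow_le [Fintype X] [Nonempty S] {k : ℕ} [NeZero k]
    (hh : IsStarUniversal h k) (hq : q ≠ 0) {P : X → ℝ} (hP0 : ∀ x, 0 ≤ P x) :
    ((q : ℝ) ^ m * Fintype.card S) ^ (k - 1) * ∑ z, jointPMF h P z ^ k
      ≤ ∑ g : Fin k → X, ((q : ℝ) ^ m) ^ (k - #(univ.image g)) * ∏ i, P (g i) := by
  have hN : (0 : ℝ) < Fintype.card S := Nat.cast_pos.mpr Fintype.card_pos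
  rw [sum_jointPMF_pow h P k, ← mul_assoc, mul_sum]
  refine sum_le_sum fun g _ => ?_
  obtain ⟨hl, hlk⟩ : 1 ≤ #(univ.image g) ∧ #(univ.image g) ≤ k := by
    simpa using card_image_univ_mem_Icc g
  have hD := hh.card_collisionSet_div_le g hlk
  rw [div_le_iff₀ hN] at hD
  have hprod : 0 ≤ ∏ i, P (g i) := prod_nonneg fun i _ => hP0 (g i)
  calc ((q : ℝ) ^ m * Fintype.card S) ^ (k - 1) * (Fintype.card S : ℝ)⁻¹ ^ k
        * (#(collisionSet h g) * ∏ i, P (g i))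
      ≤ ((q : ℝ) ^ m * Fintype.card S) ^ (k - 1) * (Fintype.card S : ℝ)⁻¹ ^ k
        * ((((q : ℝ) ^ m) ^ (#(univ.image g) - 1))⁻¹ * Fintype.card S * ∏ i, P (g i)) := by
        gcongr
    _ = ((q : ℝ) ^ m) ^ (k - #(univ.image g)) * ∏ i, P (g i) := by
        have hQ : ((q : ℝ) ^ m) ^ (k - 1)
            = ((q : ℝ) ^ m) ^ (k - #(univ.image g)) * ((q : ℝ) ^ m) ^ (#(univ.image g) - 1) := by
          rw [← pow_add]; congr 1; omega
        have hNk : (Fintype.card S : ℝ) ^ k = Fintype.card S ^ (k - 1) * Fintype.card S := by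
          rw [← pow_succ]; congr 1; omega
        have : (q : ℝ) ^ m ≠ 0 := by positivity
        rw [mul_pow, hQ, inv_pow, hNk]
        field_simp

end Hashing

theorem rpow_mul_renyiD_const {Z : Type*} [Fintype Z] {q : ℕ} (hq : 1 < q) {k : ℕ} (hk : 1 < k)
    (P : Z → ℝ) {c : ℝ} (hc : 0 < c) (hP : 0 < ∑ z, P z ^ k) :
    (q : ℝ) ^ (((k : ℝ) - 1) * renyiD q k P (fun _ => c)) = c⁻¹ ^ (k - 1) * ∑ z, P z ^ k := by
  have hq' : (1 : ℝ) < q := by exact_mod_cast hq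
  have hk' : (k : ℝ) - 1 ≠ 0 := sub_ne_zero.mpr (by exact_mod_cast hk.ne')
  have hsum : ∑ z, P z ^ (k : ℝ) * c ^ (1 - (k : ℝ)) = c⁻¹ ^ (k - 1) * ∑ z, P z ^ k := by
    rw [mul_sum]
    refine sum_congr rfl fun z _ => ?_
    rw [Real.rpow_natCast, mul_comm, ← Real.rpow_natCast c⁻¹, Nat.cast_sub hk.le, Nat.cast_one,
      Real.inv_rpow hc.le, ← Real.rpow_neg hc.le, neg_sub]
  rw [renyiD, ← mul_assoc, mul_inv_cancel₀ hk', one_mul, hsum,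
    Real.rpow_logb (by positivity) hq'.ne' (by positivity)]

theorem lhl_integer_order_general {S X : Type*} [Fintype S] [Fintype X] [Nonempty S]
    (q m k : ℕ) (hq : 2 ≤ q) (hk : 2 ≤ k)
    (h : S → X → (Fin m → Fin q)) (P : X → ℝ)
    (hP0 : ∀ x, 0 ≤ P x) (hP1 : ∑ x, P x = 1)
    (hUniv : ∀ l : ℕ, 2 ≤ l → l ≤ k → ∀ x : Fin l → X, Function.Injective x →
      ((univ.filter fun s : S => ∀ i j, h s (x i) = h s (x j)).card : ℝ)
          / (Fintype.card S : ℝ)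
        ≤ ((q : ℝ) ^ (m * (l - 1)))⁻¹) :
    (q : ℝ) ^ (((k : ℝ) - 1) * renyiD q k (jointPMF h P)
        (fun _ => ((q : ℝ) ^ m)⁻¹ * (Fintype.card S : ℝ)⁻¹))
      ≤ ∑ l ∈ Finset.Icc 1 k, (stirling2 k l : ℝ) *
          (q : ℝ) ^ (((k : ℝ) - (l : ℝ)) * ((m : ℝ) - renyiH q k P)) := by
  classical
  have : NeZero k := ⟨by omega⟩
  have hP : ∑ x, P x ≠ 0 := hP1 ▸ one_ne_zero
  have hJ := sum_pow_pos (jointPMF_nonneg h hP0) ((sum_jointPMF h P).trans_ne hP) k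
  calc _ = ((q : ℝ) ^ m * Fintype.card S) ^ (k - 1) * ∑ z, jointPMF h P z ^ k := by
        rw [rpow_mul_renyiD_const hq hk _ (by positivity) hJ, mul_inv, inv_inv, inv_inv]
    _ ≤ ∑ g : Fin k → X, ((q : ℝ) ^ m) ^ (k - #(univ.image g)) * ∏ i, P (g i) :=
        IsStarUniversal.sum_jointPMF_pow_le hUniv (by omega) hP0
    _ ≤ ∑ l ∈ Icc 1 k, Nat.stirlingSecond k l * ((q : ℝ) ^ m * renyiScale k P) ^ (k - l) :=
        sum_pow_sub_card_image_mul_prod_le hP0 hP1 (by positivity)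
    _ = _ := by
        refine sum_congr rfl fun l hl => ?_
        rw [stirling2_eq_stirlingSecond,
          renyiScale_eq_rpow_neg_renyiH hq (sum_pow_pos hP0 hP k),
          ← Real.rpow_natCast (q : ℝ) m, ← Real.rpow_add (by positivity), ← Real.rpow_natCast,
          ← Real.rpow_mul (by positivity), Nat.cast_sub (mem_Icc.mp hl).2, ← sub_eq_add_neg,
          mul_comm (_ - _)]

/-- Theorem 3.2 (integer-order leftover hash lemma): for a `k*`-universal hash function,
`q^{(k-1)·D_k(P_{(h(S,X),S)} ‖ P_U × P_S)} ≤ ∑_{l=1}^k S(k,l) q^{(k-l)(m - H_k(X))}`. -/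
theorem lhl_integer_order {S X : Type*} [Fintype S] [Fintype X] [Nonempty S] [Nonempty X]
    (q m k : ℕ) (hq : 2 ≤ q) (hm : 1 ≤ m) (hk : 2 ≤ k)
    (h : S → X → (Fin m → Fin q)) (P : X → ℝ)
    (hP0 : ∀ x, 0 ≤ P x) (hP1 : ∑ x, P x = 1)
    (hUniv : ∀ l : ℕ, 2 ≤ l → l ≤ k → ∀ x : Fin l → X, Function.Injective x →
      ((univ.filter fun s : S => ∀ i j, h s (x i) = h s (x j)).card : ℝ)
          / (Fintype.card S : ℝ)
        ≤ ((q : ℝ) ^ (m * (l - 1)))⁻¹) :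
    (q : ℝ) ^ (((k : ℝ) - 1) * renyiD q k (jointPMF h P)
        (fun _ => ((q : ℝ) ^ m)⁻¹ * (Fintype.card S : ℝ)⁻¹))
      ≤ ∑ l ∈ Finset.Icc 1 k, (stirling2 k l : ℝ) *
          (q : ℝ) ^ (((k : ℝ) - (l : ℝ)) * ((m : ℝ) - renyiH q k P)) :=
  lhl_integer_order_general q m k hq hk h P hP0 hP1 hUniv
end

section
/- Let $Y,S$ be jointly distributed finite random variables with $Y$ taking values in a set of size $N$, with $U$ uniform on that set, and let $k \ge 2$. Then $D_\infty(P_Y\|P_U\mid P_S) \le \frac{k-1}{k} D_k(P_Y\|P_U\mid P_S) + \frac{1}{k}\log_q N$, where $D_\infty(P\|U) = \max_u \log_q\big(P(u)/U(u)\big)$ and $D_\infty(P_Y\|P_U\mid P_S) = \sum_s P_S(s) D_\infty(P_{Y|S}(\cdot|s)\|P_U)$. -/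
/-! For a probability vector `p` on a set of size `N` and any `β > 0`, the largest term of a sum
of nonnegative terms is at most the sum, so `max_u p(u) N ≤ (∑_u (p(u) N)^β)^{1/β}`; and
`((β-1)/β) D_β(p‖U) + (1/β) log N` is exactly `(1/β) log ∑_u (p(u) N)^β`. Averaging over `s`
with weights `P_S(s)` gives the conditional statement. -/

open Finset

/-- Conditional Rényi divergence of order `β` from uniform:
`∑_s P_S(s) D_β(P_{Y|S}(·|s) ‖ U)` where `U` is uniform on `V`. -/
noncomputable def condRenyiDivUnif {V S : Type*} [Fintype V] [Fintype S]
    (q : ℕ) (β : ℝ) (J : V × S → ℝ) : ℝ :=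
  ∑ s : S, (∑ u, J (u, s)) *
    ((β - 1)⁻¹ * Real.logb q
      (∑ u, (J (u, s) / ∑ u', J (u', s)) ^ β * ((Fintype.card V : ℝ)⁻¹) ^ (1 - β)))

/-- Conditional `∞`-Rényi divergence from uniform:
`∑_s P_S(s) max_u log_q (P_{Y|S}(u|s)/U(u))`. -/
noncomputable def condRenyiDivInfUnif {V S : Type*} [Fintype V] [Fintype S] [Nonempty V]
    (q : ℕ) (J : V × S → ℝ) : ℝ :=
  ∑ s : S, (∑ u, J (u, s)) *
    (⨆ u : V, Real.logb q ((J (u, s) / ∑ u', J (u', s)) * (Fintype.card V : ℝ)))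

section RenyiDivUnif

variable {V : Type*} [Fintype V]

noncomputable def renyiDivUnif (b β : ℝ) (p : V → ℝ) : ℝ :=
  (β - 1)⁻¹ * Real.logb b (∑ u, p u ^ β * ((Fintype.card V : ℝ)⁻¹) ^ (1 - β))

noncomputable def renyiDivInfUnif (b : ℝ) (p : V → ℝ) : ℝ :=
  ⨆ u : V, Real.logb b (p u * Fintype.card V)

variable [Nonempty V] {p : V → ℝ}

theorem exists_one_le_mul_card (hp1 : ∑ u, p u = 1) : ∃ u, 1 ≤ p u * Fintype.card V := by
  have hN : (0 : ℝ) < Fintype.card V := by exact_mod_cast Fintype.card_pos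
  obtain ⟨u, -, hu⟩ := exists_le_of_sum_le (s := univ) (f := fun _ => (Fintype.card V : ℝ)⁻¹)
    (g := p) univ_nonempty (by simp [hp1, hN.ne'])
  exact ⟨u, by rw [inv_le_iff_one_le_mul₀ hN] at hu; linarith⟩

theorem one_le_sum_rpow_mul_card {β : ℝ} (hβ : 0 ≤ β) (hp0 : ∀ u, 0 ≤ p u)
    (hp1 : ∑ u, p u = 1) : 1 ≤ ∑ u, (p u * Fintype.card V) ^ β := by
  obtain ⟨u, hu⟩ := exists_one_le_mul_card hp1
  calc 1 ≤ (p u * Fintype.card V) ^ β := Real.one_le_rpow hu hβ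
    _ ≤ _ := single_le_sum (f := fun v => (p v * Fintype.card V) ^ β)
      (fun v _ => Real.rpow_nonneg (mul_nonneg (hp0 v) (Nat.cast_nonneg _)) β) (mem_univ u)

theorem logb_mul_card_le_inv_mul_logb_sum_rpow {b β : ℝ} (hb : 1 < b) (hβ : 0 < β)
    (hp0 : ∀ u, 0 ≤ p u) (hp1 : ∑ u, p u = 1) (u : V) :
    Real.logb b (p u * Fintype.card V)
      ≤ β⁻¹ * Real.logb b (∑ v, (p v * Fintype.card V) ^ β) := by
  have hT := one_le_sum_rpow_mul_card hβ.le hp0 hp1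
  rcases (mul_nonneg (hp0 u) (Nat.cast_nonneg (Fintype.card V))).eq_or_lt with hx | hx
  · -- `logb b 0 = 0` is a junk value, which the bound `1 ≤ ∑ ...` still dominates
    rw [← hx, Real.logb_zero]
    exact mul_nonneg (inv_nonneg.2 hβ.le) (Real.logb_nonneg hb hT)
  · have hle : (p u * Fintype.card V) ^ β ≤ ∑ v, (p v * Fintype.card V) ^ β :=
      single_le_sum (f := fun v => (p v * Fintype.card V) ^ β)
        (fun v _ => Real.rpow_nonneg (mul_nonneg (hp0 v) (Nat.cast_nonneg _)) β) (mem_univ u)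
    calc Real.logb b (p u * Fintype.card V)
        = β⁻¹ * Real.logb b ((p u * Fintype.card V) ^ β) := by
          rw [Real.logb_rpow_eq_mul_logb_of_pos hx, inv_mul_cancel_left₀ hβ.ne']
      _ ≤ _ := by gcongr

theorem sum_rpow_mul_inv_card_rpow_mul_card {β : ℝ} (hp0 : ∀ u, 0 ≤ p u) :
    (∑ u, p u ^ β * ((Fintype.card V : ℝ)⁻¹) ^ (1 - β)) * Fintype.card V
      = ∑ u, (p u * Fintype.card V) ^ β := by
  have hN : (0 : ℝ) < Fintype.card V := by exact_mod_cast Fintype.card_pos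
  rw [sum_mul]
  refine sum_congr rfl fun u _ => ?_
  rw [Real.mul_rpow (hp0 u) hN.le, Real.inv_rpow hN.le, ← Real.rpow_neg hN.le, neg_sub,
    mul_assoc, ← Real.rpow_add_one hN.ne', sub_add_cancel]

theorem renyiDivUnif_interpolation_eq {b β : ℝ} (hβ0 : 0 < β) (hβ1 : β ≠ 1)
    (hp0 : ∀ u, 0 ≤ p u) (hp1 : ∑ u, p u = 1) :
    (β - 1) / β * renyiDivUnif b β p + 1 / β * Real.logb b (Fintype.card V)
      = β⁻¹ * Real.logb b (∑ u, (p u * Fintype.card V) ^ β) := by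
  have hN : (0 : ℝ) < Fintype.card V := by exact_mod_cast Fintype.card_pos
  have hsum := sum_rpow_mul_inv_card_rpow_mul_card (β := β) hp0
  have hT : ∑ u, p u ^ β * ((Fintype.card V : ℝ)⁻¹) ^ (1 - β) ≠ 0 := by
    refine left_ne_zero_of_mul (a := _) (b := (Fintype.card V : ℝ)) ?_
    rw [hsum]
    exact (one_pos.trans_le (one_le_sum_rpow_mul_card hβ0.le hp0 hp1)).ne'
  rw [← hsum, Real.logb_mul hT hN.ne', renyiDivUnif]
  generalize Real.logb b (∑ u, p u ^ β * ((Fintype.card V : ℝ)⁻¹) ^ (1 - β)) = L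
  have : β - 1 ≠ 0 := sub_ne_zero.2 hβ1
  field_simp

theorem renyiDivInfUnif_le {b β : ℝ} (hb : 1 < b) (hβ0 : 0 < β) (hβ1 : β ≠ 1)
    (hp0 : ∀ u, 0 ≤ p u) (hp1 : ∑ u, p u = 1) :
    renyiDivInfUnif b p
      ≤ (β - 1) / β * renyiDivUnif b β p + 1 / β * Real.logb b (Fintype.card V) := by
  rw [renyiDivUnif_interpolation_eq hβ0 hβ1 hp0 hp1]
  exact ciSup_le (logb_mul_card_le_inv_mul_logb_sum_rpow hb hβ0 hp0 hp1)

end RenyiDivUnif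

theorem sum_mul_le_of_forall_pos_imp_le_affine {S : Type*} [Fintype S] {w A B : S → ℝ}
    {c d : ℝ} (hw0 : ∀ s, 0 ≤ w s) (hw1 : ∑ s, w s = 1)
    (h : ∀ s, 0 < w s → A s ≤ c * B s + d) :
    ∑ s, w s * A s ≤ c * ∑ s, w s * B s + d := by
  calc ∑ s, w s * A s ≤ ∑ s, w s * (c * B s + d) := by
        refine sum_le_sum fun s _ => ?_
        rcases (hw0 s).eq_or_lt with hs | hs
        · simp [← hs]
        · exact mul_le_mul_of_nonneg_left (h s hs) hs.le
    _ = c * ∑ s, w s * B s + d := by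
        simp only [mul_add, sum_add_distrib, ← sum_mul, hw1, one_mul, mul_sum, mul_left_comm]

/-- `D_∞(P_Y‖P_U|P_S) ≤ ((k-1)/k) D_k(P_Y‖P_U|P_S) + (1/k) log_q N` for `k ≥ 2`. -/
theorem condRenyiDivInf_interpolation {V S : Type*} [Fintype V] [Fintype S] [Nonempty V]
    (q : ℕ) (hq : 2 ≤ q) (k : ℕ) (hk : 2 ≤ k)
    (J : V × S → ℝ) (hJ0 : ∀ z, 0 ≤ J z) (hJ1 : ∑ z, J z = 1) :
    condRenyiDivInfUnif q J
      ≤ ((k : ℝ) - 1) / k * condRenyiDivUnif q k J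
        + (1 / (k : ℝ)) * Real.logb q (Fintype.card V) := by
  have hq1 : (1 : ℝ) < q := by exact_mod_cast hq
  have hk0 : (0 : ℝ) < k := by positivity
  have hk1 : (k : ℝ) ≠ 1 := by exact_mod_cast (by omega : k ≠ 1)
  have hPS : ∑ s, ∑ u, J (u, s) = 1 := by rw [← hJ1, Fintype.sum_prod_type_right]
  -- both conditional divergences unfold definitionally to `P_S`-averages of the unconditional ones
  exact sum_mul_le_of_forall_pos_imp_le_affine (fun s => sum_nonneg fun u _ => hJ0 (u, s)) hPS
    fun s hs => renyiDivInfUnif_le hq1 hk0 hk1 (fun u => div_nonneg (hJ0 (u, s)) hs.le)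
      (by rw [← sum_div, div_self hs.ne'])
end
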